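/- Let {x_k} ⊂ ℝⁿ with l ≤ x_k ≤ u componentwise for all k, let {a_k}, {b_k} ⊂ ℝⁿ, and let μ > 0 be fixed. If P(x_k − μ·a_k − b_k) − x_k → 0 and b_k → 0, then P(x_k − a_k) − x_k → 0. -/

import Mathlib

open Filter

/-- Componentwise projection onto the box `[l, u]`. -/
noncomputable def boxProj {n : ℕ} (l u z : EuclideanSpace ℝ (Fin n)) :
    EuclideanSpace ℝ (Fin n) :=
  WithLp.toLp 2 (fun i => max (l i) (min (u i) (z i)))

/-!
Along the ray `t ↦ x - t a` from a point `x` of the box, each coordinate of the projected step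
`P(x - t a) - x` has size `min c (t |a|)`, where `c` is the room between `x` and the face the step
heads for. With `M = max 1 μ⁻¹`, so that `M ≥ 1` and `M μ ≥ 1`, this gives
`‖P(x - a) - x‖ ≤ M ‖P(x - μ a) - x‖`; and as `P` is nonexpansive,
`‖P(x - μ a) - x‖ ≤ ‖P(x - μ a - b) - x‖ + ‖b‖`, where both terms tend to zero.
-/

section Clamp

variable {l u x : ℝ}

lemma abs_clamp_sub_mul_sub (hl : l ≤ x) (hu : x ≤ u) (a : ℝ) {t : ℝ} (ht : 0 ≤ t) :
    |max l (min u (x - t * a)) - x| = min (if 0 ≤ a then x - l else u - x) (t * |a|) := by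
  rcases le_or_gt 0 a with ha | ha
  · have hta : 0 ≤ t * a := mul_nonneg ht ha
    rw [if_pos ha, abs_of_nonneg ha, min_eq_right (by linarith : x - t * a ≤ u)]
    rcases le_total l (x - t * a) with h | h
    · rw [max_eq_right h, abs_of_nonpos (by linarith), min_eq_right (by linarith)]; ring
    · rw [max_eq_left h, abs_of_nonpos (by linarith), min_eq_left (by linarith)]; ring
  · have hta : t * a ≤ 0 := mul_nonpos_of_nonneg_of_nonpos ht ha.le
    rw [if_neg ha.not_ge, abs_of_neg ha, max_eq_right (le_min (hl.trans hu) (by linarith))]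
    rcases le_total u (x - t * a) with h | h
    · rw [min_eq_left h, abs_of_nonneg (by linarith), min_eq_left (by linarith)]
    · rw [min_eq_right h, abs_of_nonneg (by linarith), min_eq_right (by linarith)]; ring

lemma abs_clamp_sub_le_mul (hl : l ≤ x) (hu : x ≤ u) (a : ℝ) {μ : ℝ} (hμ : 0 < μ) :
    |max l (min u (x - a)) - x| ≤ max 1 μ⁻¹ * |max l (min u (x - μ * a)) - x| := by
  have h1 := abs_clamp_sub_mul_sub hl hu a zero_le_one
  rw [one_mul, one_mul] at h1
  rw [h1, abs_clamp_sub_mul_sub hl hu a hμ.le, mul_min_of_nonneg _ _ (by positivity)]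
  have hc : 0 ≤ if 0 ≤ a then x - l else u - x := by split_ifs <;> linarith
  have hμM : 1 ≤ max 1 μ⁻¹ * μ := by
    rw [max_mul_of_nonneg _ _ hμ.le, inv_mul_cancel₀ hμ.ne']; exact le_max_right _ _
  gcongr
  · exact le_mul_of_one_le_left hc (le_max_left _ _)
  · rw [← mul_assoc]; exact le_mul_of_one_le_left (abs_nonneg a) hμM

end Clamp

lemma EuclideanSpace.norm_le_norm_of_abs_le {ι : Type*} [Fintype ι] {v w : EuclideanSpace ℝ ι}
    (h : ∀ i, |v i| ≤ |w i|) : ‖v‖ ≤ ‖w‖ := by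
  simp only [EuclideanSpace.norm_eq, Real.norm_eq_abs]
  exact Real.sqrt_le_sqrt (Finset.sum_le_sum fun i _ => pow_le_pow_left₀ (abs_nonneg _) (h i) 2)

section BoxProj

variable {n : ℕ} {l u : EuclideanSpace ℝ (Fin n)}

lemma norm_boxProj_sub_boxProj_le (z z' : EuclideanSpace ℝ (Fin n)) :
    ‖boxProj l u z - boxProj l u z'‖ ≤ ‖z - z'‖ := by
  refine EuclideanSpace.norm_le_norm_of_abs_le fun i => ?_
  simp only [boxProj, PiLp.sub_apply]
  calc |max (l i) (min (u i) (z i)) - max (l i) (min (u i) (z' i))|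
      ≤ |min (u i) (z i) - min (u i) (z' i)| := by
        rw [max_comm (l i), max_comm (l i)]; exact abs_max_sub_max_le_abs _ _ _
    _ ≤ |z i - z' i| := (abs_min_sub_min_le_max _ _ _ _).trans (by simp)

lemma norm_boxProj_sub_le (z b x : EuclideanSpace ℝ (Fin n)) :
    ‖boxProj l u z - x‖ ≤ ‖boxProj l u (z - b) - x‖ + ‖b‖ := by
  calc ‖boxProj l u z - x‖ ≤ ‖boxProj l u z - boxProj l u (z - b)‖ + ‖boxProj l u (z - b) - x‖ :=
        norm_sub_le_norm_sub_add_norm_sub _ _ _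
    _ ≤ ‖b‖ + ‖boxProj l u (z - b) - x‖ := by
        gcongr; simpa using norm_boxProj_sub_boxProj_le z (z - b)
    _ = _ := add_comm _ _

lemma norm_boxProj_sub_le_mul {x : EuclideanSpace ℝ (Fin n)} (hx : ∀ i, l i ≤ x i ∧ x i ≤ u i)
    (a : EuclideanSpace ℝ (Fin n)) {μ : ℝ} (hμ : 0 < μ) :
    ‖boxProj l u (x - a) - x‖ ≤ max 1 μ⁻¹ * ‖boxProj l u (x - μ • a) - x‖ := by
  have hM : 0 ≤ max 1 μ⁻¹ := zero_le_one.trans (le_max_left _ _)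
  rw [← abs_of_nonneg hM, ← Real.norm_eq_abs, ← norm_smul]
  refine EuclideanSpace.norm_le_norm_of_abs_le fun i => ?_
  simpa [boxProj, abs_mul, abs_of_nonneg hM] using abs_clamp_sub_le_mul (hx i).1 (hx i).2 (a i) hμ

end BoxProj

theorem stmt12_general {n : ℕ} (l u : EuclideanSpace ℝ (Fin n))
    (x a b : ℕ → EuclideanSpace ℝ (Fin n))
    (hbox : ∀ k, ∀ i, l i ≤ x k i ∧ x k i ≤ u i)
    (μ : ℝ) (hμ : 0 < μ)
    (h1 : Tendsto (fun k => boxProj l u (x k - μ • a k - b k) - x k) atTop (nhds 0))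
    (h2 : Tendsto b atTop (nhds 0)) :
    Tendsto (fun k => boxProj l u (x k - a k) - x k) atTop (nhds 0) := by
  set M := max 1 μ⁻¹
  have hbound : ∀ k, ‖boxProj l u (x k - a k) - x k‖ ≤
      M * (‖boxProj l u (x k - μ • a k - b k) - x k‖ + ‖b k‖) := fun k =>
    (norm_boxProj_sub_le_mul (hbox k) (a k) hμ).trans <|
      mul_le_mul_of_nonneg_left (norm_boxProj_sub_le _ _ _) (zero_le_one.trans (le_max_left _ _))
  have hlim : Tendsto (fun k => M * (‖boxProj l u (x k - μ • a k - b k) - x k‖ + ‖b k‖))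
      atTop (nhds 0) := by
    simpa using (h1.norm.add h2.norm).const_mul M
  exact squeeze_zero_norm hbound hlim

/-- If `l ≤ x_k ≤ u`, `μ > 0` is fixed, `P(x_k − μ a_k − b_k) − x_k → 0` and `b_k → 0`,
then `P(x_k − a_k) − x_k → 0`. -/
theorem stmt12 {n : ℕ} (l u : EuclideanSpace ℝ (Fin n)) (hlu : ∀ i, l i ≤ u i)
    (x a b : ℕ → EuclideanSpace ℝ (Fin n))
    (hbox : ∀ k, ∀ i, l i ≤ x k i ∧ x k i ≤ u i)
    (μ : ℝ) (hμ : 0 < μ)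
    (h1 : Tendsto (fun k => boxProj l u (x k - μ • a k - b k) - x k) atTop (nhds 0))
    (h2 : Tendsto b atTop (nhds 0)) :
    Tendsto (fun k => boxProj l u (x k - a k) - x k) atTop (nhds 0) :=
  stmt12_general l u x a b hbox μ hμ h1 h2
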